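/- arXiv:2206.03588 — 5 statements merged into one kernel-verified Lean document; each statement's English description precedes it below -/
import Mathlib

section
/- The adaptive thresholding operator C with parameter λ ∈ (0,1], which keeps entry X_{jl} if |X_{jl}| ≥ λ‖X‖_∞ and sets it to 0 otherwise, satisfies ‖C(X) − X‖²_F ≤ (1 − α)‖X‖²_F for all X ∈ ℝ^{d×d}, where α = max(1 − (dλ)², 1/d²). -/
open Matrix Finset

/-- Squared Frobenius norm of a real `d × d` matrix. -/
def frobSq {d : ℕ} (X : Matrix (Fin d) (Fin d) ℝ) : ℝ := ∑ j, ∑ l, (X j l)^2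

/-- Infinity (max absolute entry) norm of a matrix. -/
noncomputable def infNorm {d : ℕ} (X : Matrix (Fin d) (Fin d) ℝ) : ℝ :=
  ((Finset.univ.sup fun p : Fin d × Fin d => ‖X p.1 p.2‖₊ : NNReal) : ℝ)

/-- Adaptive thresholding operator with parameter `lam`: keeps `X j l` iff
`|X j l| ≥ lam * ‖X‖_∞`. -/
noncomputable def AT {d : ℕ} (lam : ℝ) (X : Matrix (Fin d) (Fin d) ℝ) :
    Matrix (Fin d) (Fin d) ℝ :=
  fun j l => if lam * infNorm X ≤ |X j l| then X j l else 0

/-- The adaptive thresholding operator with parameter `λ ∈ (0,1]` is a contractive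
compressor with `α = max (1 - (dλ)²) (1/d²)`. -/
theorem adaptive_thresholding_contractive {d : ℕ} (hd : 0 < d)
    (lam : ℝ) (hlam0 : 0 < lam) (hlam1 : lam ≤ 1)
    (X : Matrix (Fin d) (Fin d) ℝ) :
    frobSq (AT lam X - X) ≤
      (1 - max (1 - ((d : ℝ) * lam)^2) (1 / (d : ℝ)^2)) * frobSq X := by
  haveI : NeZero d := ⟨hd.ne'⟩
  set M := infNorm X with hM
  have hM0 : 0 ≤ M := NNReal.coe_nonneg _
  have hle : ∀ j l, |X j l| ≤ M := by
    intro j l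
    have h := Finset.le_sup (f := fun p : Fin d × Fin d => ‖X p.1 p.2‖₊)
      (Finset.mem_univ (j, l))
    have h2 := NNReal.coe_le_coe.mpr h
    simpa [infNorm, Real.norm_eq_abs, hM] using h2
  obtain ⟨p, -, hp⟩ := Finset.exists_mem_eq_sup (Finset.univ : Finset (Fin d × Fin d))
    Finset.univ_nonempty (fun p => ‖X p.1 p.2‖₊)
  have hpM : |X p.1 p.2| = M := by
    have h2 := congrArg (fun x : NNReal => (x : ℝ)) hp
    simpa [infNorm, Real.norm_eq_abs, hM] using h2.symm
  have hterm : ∀ j l, ((AT lam X - X) j l)^2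
      = if lam * M ≤ |X j l| then 0 else (X j l)^2 := by
    intro j l
    by_cases h : lam * M ≤ |X j l| <;> simp [AT, Matrix.sub_apply, h, ← hM]
  have hS : frobSq (AT lam X - X)
      = ∑ j, ∑ l, (if lam * M ≤ |X j l| then 0 else (X j l)^2) := by
    unfold frobSq
    exact Finset.sum_congr rfl fun j _ => Finset.sum_congr rfl fun l _ => hterm j l
  set F := frobSq X with hF
  have hF0 : 0 ≤ F :=
    Finset.sum_nonneg fun j _ => Finset.sum_nonneg fun l _ => sq_nonneg _
  -- M^2 ≤ F
  have hMF : M ^ 2 ≤ F := by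
    calc M ^ 2 = (X p.1 p.2) ^ 2 := by rw [← hpM, sq_abs]
    _ ≤ ∑ l, (X p.1 l) ^ 2 :=
        Finset.single_le_sum (f := fun l => (X p.1 l) ^ 2)
          (fun l _ => sq_nonneg _) (Finset.mem_univ p.2)
    _ ≤ F := Finset.single_le_sum
        (f := fun j => ∑ l, (X j l) ^ 2)
        (fun j _ => Finset.sum_nonneg fun l _ => sq_nonneg _) (Finset.mem_univ p.1)
  -- F ≤ d^2 M^2
  have hFd : F ≤ (d : ℝ) ^ 2 * M ^ 2 := by
    have : F ≤ ∑ _j : Fin d, ∑ _l : Fin d, M ^ 2 :=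
      Finset.sum_le_sum fun j _ => Finset.sum_le_sum fun l _ => by
        calc (X j l) ^ 2 = |X j l| ^ 2 := (sq_abs _).symm
        _ ≤ M ^ 2 := pow_le_pow_left₀ (abs_nonneg _) (hle j l) 2
    have h4 : (∑ _j : Fin d, ∑ _l : Fin d, M ^ 2) = (d : ℝ) ^ 2 * M ^ 2 := by
      simp [Finset.sum_const, Finset.card_univ]
      ring
    linarith [h4 ▸ this]
  have hdpos : (0 : ℝ) < (d : ℝ) ^ 2 := by positivity
  -- bound 1
  have h1 : frobSq (AT lam X - X) ≤ ((d : ℝ) * lam) ^ 2 * F := by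
    rw [hS]
    have hs : (∑ j : Fin d, ∑ l : Fin d,
        (if lam * M ≤ |X j l| then (0:ℝ) else (X j l)^2))
        ≤ ∑ _j : Fin d, ∑ _l : Fin d, (lam * M) ^ 2 := by
      apply Finset.sum_le_sum
      intro j _
      apply Finset.sum_le_sum
      intro l _
      by_cases h : lam * M ≤ |X j l|
      · simp [h]
        positivity
      · simp only [h, if_false]
        calc (X j l) ^ 2 = |X j l| ^ 2 := (sq_abs _).symm
        _ ≤ (lam * M) ^ 2 := pow_le_pow_left₀ (abs_nonneg _) (le_of_lt (not_le.mp h)) 2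
    have hcard : (∑ _j : Fin d, ∑ _l : Fin d, (lam * M) ^ 2)
        = (d : ℝ) ^ 2 * (lam * M) ^ 2 := by
      simp [Finset.sum_const, Finset.card_univ]
      ring
    have hfin : (d : ℝ) ^ 2 * (lam * M) ^ 2 ≤ ((d : ℝ) * lam) ^ 2 * F := by
      have h3 := mul_le_mul_of_nonneg_left hMF
        (by positivity : (0:ℝ) ≤ ((d : ℝ) * lam) ^ 2)
      nlinarith [h3]
    linarith [hs, hcard ▸ hs, hfin, hcard.le, hcard.ge]
  -- bound 2
  have hkept : lam * M ≤ |X p.1 p.2| := by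
    rw [hpM]
    nlinarith
  have h2 : frobSq (AT lam X - X) ≤ (1 - 1 / (d : ℝ) ^ 2) * F := by
    have hdiff : M ^ 2 ≤ ∑ j, ∑ l,
        ((X j l) ^ 2 - (if lam * M ≤ |X j l| then (0:ℝ) else (X j l)^2)) := by
      have hnn : ∀ j l, (0:ℝ) ≤ (X j l) ^ 2 -
          (if lam * M ≤ |X j l| then (0:ℝ) else (X j l)^2) := by
        intro j l
        by_cases h : lam * M ≤ |X j l| <;> simp [h, sq_nonneg]
      calc M ^ 2 = (X p.1 p.2) ^ 2 -
          (if lam * M ≤ |X p.1 p.2| then (0:ℝ) else (X p.1 p.2)^2) := by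
            rw [if_pos hkept, ← hpM, sq_abs]; ring
      _ ≤ ∑ l, ((X p.1 l) ^ 2 -
          (if lam * M ≤ |X p.1 l| then (0:ℝ) else (X p.1 l)^2)) :=
          Finset.single_le_sum (fun l _ => hnn p.1 l) (Finset.mem_univ p.2)
      _ ≤ _ := Finset.single_le_sum
          (f := fun j => ∑ l, ((X j l) ^ 2 -
            (if lam * M ≤ |X j l| then (0:ℝ) else (X j l)^2)))
          (fun j _ => Finset.sum_nonneg fun l _ => hnn j l) (Finset.mem_univ p.1)
    have hsplit : (∑ j : Fin d, ∑ l : Fin d,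
        ((X j l) ^ 2 - (if lam * M ≤ |X j l| then (0:ℝ) else (X j l)^2)))
        = F - frobSq (AT lam X - X) := by
      rw [hS, hF]
      unfold frobSq
      rw [← Finset.sum_sub_distrib]
      exact Finset.sum_congr rfl fun j _ => by rw [Finset.sum_sub_distrib]
    rw [hsplit] at hdiff
    have hFd2 : F / (d : ℝ) ^ 2 ≤ M ^ 2 := by
      rw [div_le_iff₀ hdpos]
      linarith [hFd]
    have : (1 - 1 / (d : ℝ) ^ 2) * F = F - F / (d : ℝ) ^ 2 := by ring
    rw [this]
    have hFF : F / (d : ℝ) ^ 2 ≤ F := by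
      calc F / (d : ℝ) ^ 2 ≤ M ^ 2 := hFd2
      _ ≤ F := hMF
    linarith
  rcases le_total (1 - ((d : ℝ) * lam) ^ 2) (1 / (d : ℝ) ^ 2) with h | h
  · rw [max_eq_right h]
    exact h2
  · rw [max_eq_left h]
    have : (1 - (1 - ((d : ℝ) * lam) ^ 2)) = ((d : ℝ) * lam) ^ 2 := by ring
    rw [this]
    exact h1
end

section
/- The CBAG mechanism C_{H,Y}(X), which equals H + C(X−H) with probability p and H with probability 1−p, where C is a (possibly random, independent) contractive compressor with parameter α, satisfies E‖C_{H,Y}(X) − X‖²_F ≤ (1−pα)(1+s)‖H−Y‖²_F + (1−pα)(1+1/s)‖X−Y‖²_F for every s > 0 and all matrices H, Y, X ∈ ℝ^{d×d}. -/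
open Matrix Finset

lemma frobSq_nonneg {d : ℕ} (X : Matrix (Fin d) (Fin d) ℝ) : 0 ≤ frobSq X := by
  apply Finset.sum_nonneg; intro j _; apply Finset.sum_nonneg; intro l _; positivity

lemma frobSq_sub_eq {d : ℕ} (X H : Matrix (Fin d) (Fin d) ℝ) :
    frobSq (X - H) = frobSq (H - X) := by
  unfold frobSq
  congr 1; ext j; congr 1; ext l
  simp [Matrix.sub_apply]; ring

lemma frobSq_young {d : ℕ} (s : ℝ) (hs : 0 < s) (H Y X : Matrix (Fin d) (Fin d) ℝ) :
    frobSq (H - X) ≤ (1 + s) * frobSq (H - Y) + (1 + 1/s) * frobSq (X - Y) := by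
  unfold frobSq
  rw [Finset.mul_sum, Finset.mul_sum, ← Finset.sum_add_distrib]
  apply Finset.sum_le_sum; intro j _
  rw [Finset.mul_sum, Finset.mul_sum, ← Finset.sum_add_distrib]
  apply Finset.sum_le_sum; intro l _
  simp only [Matrix.sub_apply]
  set a := H j l - Y j l
  set b := X j l - Y j l
  have hab : H j l - X j l = a - b := by ring
  rw [hab]
  have h1 : 0 ≤ (s * a + b)^2 / s := by positivity
  have : (a - b)^2 ≤ (1+s)*a^2 + (1+1/s)*b^2 := by
    have hs' : s ≠ 0 := ne_of_gt hs
    rw [← sub_nonneg]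
    have : (1+s)*a^2 + (1+1/s)*b^2 - (a-b)^2 = (s*a+b)^2/s := by field_simp; ring
    rw [this]; positivity
  linarith

/-- CBAG is a 3PC compressor.  Here `EC M` denotes the expected squared compression
error `E‖C(M) − M‖²_F` of the underlying (possibly random) contractive compressor `C`
with parameter `α`.  The expected squared error of CBAG applied at `(H, Y)` to `X` is
`p * EC (X − H) + (1 − p) * ‖H − X‖²_F` (with probability `p` the output is
`H + C(X−H)`, with probability `1−p` it is `H`), and it satisfies the 3PC inequality
with `A = 1 − (1−pα)(1+s)`, `B = (1−pα)(1+1/s)` for every `s > 0`. -/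
theorem cbag_is_3PC {d : ℕ} (α p : ℝ) (hα0 : 0 < α) (hα1 : α ≤ 1)
    (hp0 : 0 < p) (hp1 : p ≤ 1)
    (EC : Matrix (Fin d) (Fin d) ℝ → ℝ)
    (hEC0 : ∀ M, 0 ≤ EC M)
    (hEC : ∀ M, EC M ≤ (1 - α) * frobSq M)
    (s : ℝ) (hs : 0 < s)
    (H Y X : Matrix (Fin d) (Fin d) ℝ) :
    p * EC (X - H) + (1 - p) * frobSq (H - X) ≤
      (1 - p*α) * (1 + s) * frobSq (H - Y)
        + (1 - p*α) * (1 + 1/s) * frobSq (X - Y) := by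
  have h1 : p * EC (X - H) + (1 - p) * frobSq (H - X) ≤ (1 - p*α) * frobSq (H - X) := by
    have := hEC (X - H)
    rw [frobSq_sub_eq] at this
    nlinarith [frobSq_nonneg (H - X)]
  have h2 := frobSq_young s hs H Y X
  have hpa : 0 ≤ 1 - p*α := by nlinarith
  nlinarith [frobSq_nonneg (H - Y), frobSq_nonneg (X - Y)]
end

section
/- The adaptive Top-K compressor C_{H,Y}(X) = H + Top-K_{H,Y}(X−H), with K_{H,Y} = min{⌈(‖Y−H‖²_F/‖X−H‖²_F)·d²⌉, d₀} for a fixed budget d₀ ≤ d², is a 3PC compressor with A = d₀/(2d²) and B = max{(1 − d₀/d²)(2d²/d₀ − 1), 3}. -/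
open Matrix Finset

lemma frobSq_swap {d : ℕ} (A B : Matrix (Fin d) (Fin d) ℝ) :
    frobSq (A - B) = frobSq (B - A) := by
  unfold frobSq
  congr 1; ext j; congr 1; ext l; simp [Matrix.sub_apply]; ring

lemma young_scalar (β u v : ℝ) (hβ : 0 < β) :
    (u + v)^2 ≤ (1+β)*u^2 + (1+1/β)*v^2 := by
  have h := sq_nonneg (β*u - v)
  have h2 : 0 < β⁻¹ := by positivity
  have hc : β * β⁻¹ = 1 := mul_inv_cancel₀ hβ.ne'
  rw [one_div]
  nlinarith [mul_nonneg h2.le h, hc]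

lemma young {d : ℕ} (β : ℝ) (hβ : 0 < β) (U V : Matrix (Fin d) (Fin d) ℝ) :
    frobSq (U + V) ≤ (1+β) * frobSq U + (1+1/β) * frobSq V := by
  unfold frobSq
  rw [Finset.mul_sum, Finset.mul_sum, ← Finset.sum_add_distrib]
  refine Finset.sum_le_sum fun j _ => ?_
  rw [Finset.mul_sum, Finset.mul_sum, ← Finset.sum_add_distrib]
  refine Finset.sum_le_sum fun l _ => ?_
  simp only [Matrix.add_apply]
  exact young_scalar β _ _ hβ


/-- The adaptive Top-K compressor `C_{H,Y}(X) = H + Top-K_{H,Y}(X−H)` with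
`K_{H,Y} = min{⌈(‖Y−H‖²_F/‖X−H‖²_F)·d²⌉, d₀}` for a fixed budget `d₀ ≤ d²` is a 3PC
compressor with `A = d₀/(2d²)` and `B = max{(1 − d₀/d²)(2d²/d₀ − 1), 3}`.
`TopK` is any family satisfying the standard Top-`K` contraction property. -/
theorem adaptive_topK_is_3PC {d d₀ : ℕ} (hd : 0 < d) (hd₀ : 0 < d₀)
    (hbudget : d₀ ≤ d^2)
    (TopK : ℕ → Matrix (Fin d) (Fin d) ℝ → Matrix (Fin d) (Fin d) ℝ)
    (hTop : ∀ K, K ≤ d^2 → ∀ M, frobSq (TopK K M - M) ≤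
      (1 - (K : ℝ)/(d : ℝ)^2) * frobSq M)
    (H Y X : Matrix (Fin d) (Fin d) ℝ) :
    frobSq (H + TopK (min (⌈(frobSq (Y - H) / frobSq (X - H)) * (d : ℝ)^2⌉₊) d₀)
        (X - H) - X) ≤
      (1 - (d₀ : ℝ)/(2*(d : ℝ)^2)) * frobSq (H - Y)
        + max ((1 - (d₀ : ℝ)/(d : ℝ)^2) * (2*(d : ℝ)^2/(d₀ : ℝ) - 1)) 3
            * frobSq (X - Y) := by
  have hd2 : (0:ℝ) < (d:ℝ)^2 := by positivity
  have hd0 : (0:ℝ) < (d₀:ℝ) := by exact_mod_cast hd₀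
  have hcast : (d₀:ℝ) ≤ (d:ℝ)^2 := by exact_mod_cast hbudget
  set a := frobSq (X - H) with ha
  set b := frobSq (Y - H) with hb
  set s := frobSq (X - Y) with hs
  set K := min (⌈(b / a) * (d : ℝ)^2⌉₊) d₀ with hKdef
  have hbY : frobSq (H - Y) = b := frobSq_swap H Y
  rw [hbY]
  have ha0 : 0 ≤ a := frobSq_nonneg _
  have hb0 : 0 ≤ b := frobSq_nonneg _
  have hs0 : 0 ≤ s := frobSq_nonneg _
  have hmat : H + TopK K (X - H) - X = TopK K (X - H) - (X - H) := by
    ext i j; simp [Matrix.add_apply, Matrix.sub_apply]; ring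
  rw [hmat]
  have hKle : K ≤ d^2 := le_trans (min_le_right _ _) hbudget
  have hmain := hTop K hKle (X - H)
  rw [← ha] at hmain
  have hdecomp : ∀ β : ℝ, 0 < β → a ≤ (1+β)*b + (1+1/β)*s := by
    intro β hβ
    have hy := young β hβ (Y - H) (X - Y)
    have he : (Y - H) + (X - Y) = X - H := by ext i j; simp only [Matrix.add_apply, Matrix.sub_apply]; ring
    rw [he] at hy
    rw [hs, hb, ha]
    linarith [hy, frobSq_swap X Y]
  clear_value a b s K
  have hmax3 : (3:ℝ) ≤ max ((1 - (d₀ : ℝ)/(d : ℝ)^2) * (2*(d : ℝ)^2/(d₀ : ℝ) - 1)) 3 :=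
    le_max_right _ _
  have hmaxB : (1 - (d₀ : ℝ)/(d : ℝ)^2) * (2*(d : ℝ)^2/(d₀ : ℝ) - 1) ≤
      max ((1 - (d₀ : ℝ)/(d : ℝ)^2) * (2*(d : ℝ)^2/(d₀ : ℝ) - 1)) 3 := le_max_left _ _
  have hAhalf : (d₀:ℝ)/(2*(d:ℝ)^2) ≤ 1/2 := by
    rw [div_le_div_iff₀ (by positivity) (by norm_num : (0:ℝ) < 2)]
    nlinarith
  have hA : (0:ℝ) ≤ 1 - (d₀:ℝ)/(2*(d:ℝ)^2) := by linarith
  have hRHS0 : 0 ≤ (1 - (d₀:ℝ)/(2*(d:ℝ)^2)) * b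
      + max ((1 - (d₀ : ℝ)/(d : ℝ)^2) * (2*(d : ℝ)^2/(d₀ : ℝ) - 1)) 3 * s :=
    add_nonneg (mul_nonneg hA hb0) (mul_nonneg (by linarith) hs0)
  by_cases haz : a = 0
  · rw [haz, mul_zero] at hmain
    linarith
  · have hapos : 0 < a := lt_of_le_of_ne ha0 (Ne.symm haz)
    rcases le_or_gt (⌈(b / a) * (d : ℝ)^2⌉₊) d₀ with hcase | hcase
    · -- K = ceil case
      have hKeq : K = ⌈(b / a) * (d : ℝ)^2⌉₊ := by rw [hKdef]; exact min_eq_left hcase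
      have hceil : (b / a) * (d:ℝ)^2 ≤ (K:ℝ) := by
        rw [hKeq]; exact Nat.le_ceil _
      have hr : b/a ≤ (K:ℝ)/(d:ℝ)^2 := by
        rw [le_div_iff₀ hd2]; exact hceil
      have hstep : frobSq (TopK K (X - H) - (X - H)) ≤ a - b := by
        have h1 : (1 - (K:ℝ)/(d:ℝ)^2) * a ≤ (1 - b/a) * a :=
          mul_le_mul_of_nonneg_right (by linarith) ha0
        have h2 : (1 - b/a) * a = a - b := by field_simp
        linarith
      set β : ℝ := 1 - (d₀:ℝ)/(2*(d:ℝ)^2) with hβdef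
      clear_value β
      have hβhalf : (1:ℝ)/2 ≤ β := by rw [hβdef]; linarith
      have hβpos : 0 < β := by linarith
      have hy := hdecomp β hβpos
      have hinv : 1/β ≤ 2 := by rw [div_le_iff₀ hβpos]; linarith
      have h3 : (1+1/β)*s ≤ 3*s := mul_le_mul_of_nonneg_right (by linarith) hs0
      have h4 : 3*s ≤ max ((1 - (d₀ : ℝ)/(d : ℝ)^2) * (2*(d : ℝ)^2/(d₀ : ℝ) - 1)) 3 * s :=
        mul_le_mul_of_nonneg_right hmax3 hs0
      linarith
    · -- K = d₀ case
      have hKeq : K = d₀ := by rw [hKdef]; exact min_eq_right hcase.le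
      have hstep : frobSq (TopK K (X - H) - (X - H)) ≤ (1 - (d₀:ℝ)/(d:ℝ)^2) * a := by
        have hKcast : (K:ℝ) = (d₀:ℝ) := by rw [hKeq]
        rw [hKcast] at hmain; exact hmain
      set t : ℝ := (d₀:ℝ)/(d:ℝ)^2 with htdef
      clear_value t
      have ht1 : t ≤ 1 := by rw [htdef, div_le_one hd2]; exact hcast
      have ht0 : 0 < t := by rw [htdef]; positivity
      have hAeq : (d₀:ℝ)/(2*(d:ℝ)^2) = t/2 := by rw [htdef]; ring
      rcases eq_or_lt_of_le ht1 with hteq | htlt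
      · rw [hteq, sub_self, zero_mul] at hstep
        linarith
      · have h1t : (0:ℝ) < 1 - t := by linarith
        have hβpos : 0 < t / (2*(1-t)) := by positivity
        have hy := hdecomp (t / (2*(1-t))) hβpos
        have hkey1 : (1 - t) * (1 + t / (2*(1-t))) = 1 - t/2 := by
          field_simp [h1t.ne']; ring
        have hkey2 : (1 - t) * (1 + 1/(t / (2*(1-t)))) = (1 - t) * (2/t - 1) := by
          rw [one_div_div]
          field_simp [h1t.ne', ht0.ne']; ring
        have hBeq : (1 - t) * (2*(d : ℝ)^2/(d₀ : ℝ) - 1) = (1 - t) * (2/t - 1) := by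
          have h2t : 2/t = 2*(d : ℝ)^2/(d₀ : ℝ) := by
            rw [htdef, div_div_eq_mul_div]
          rw [h2t]
        have hchain : (1 - t) * a ≤ (1 - t/2) * b + (1 - t)*(2/t - 1) * s := by
          calc (1 - t) * a ≤ (1 - t) * ((1 + t / (2*(1-t)))*b + (1 + 1/(t / (2*(1-t))))*s) :=
                mul_le_mul_of_nonneg_left hy h1t.le
            _ = ((1 - t) * (1 + t / (2*(1-t))))*b + ((1 - t) * (1 + 1/(t / (2*(1-t)))))*s := by
                ring
            _ = (1 - t/2) * b + (1 - t)*(2/t - 1) * s := by rw [hkey1, hkey2]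
        have hmaxB' : (1 - t)*(2/t - 1) ≤
            max ((1 - t) * (2*(d : ℝ)^2/(d₀ : ℝ) - 1)) 3 := hBeq ▸ hmaxB
        have h4 : (1 - t)*(2/t - 1) * s ≤
            max ((1 - t) * (2*(d : ℝ)^2/(d₀ : ℝ) - 1)) 3 * s :=
          mul_le_mul_of_nonneg_right hmaxB' hs0
        rw [hAeq]
        linarith
end

section
/- Under the recursion ‖x^{k+1}−x*‖² ≤ (C/μ²)‖x^k−x*‖²·H^k + (D/(2μ²))‖x^k−x*‖⁴ with C, D > 0, if ‖x^0−x*‖² ≤ μ²/(2D) and H^k ≤ μ²/(4C) for all k ≥ 0, then ‖x^k−x*‖² ≤ μ²/(2D) and ‖x^{k+1}−x*‖² ≤ ½‖x^k−x*‖² for all k ≥ 0; in particular ‖x^k−x*‖² ≤ 2^{-k}‖x^0−x*‖². -/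
/-!
Write `e k = ‖x^k - x*‖²`. As long as `e k ≤ μ²/(2D)`, each of the two terms of the recursion
is at most `e k / 4`: the first because `(C/μ²) H^k ≤ 1/4`, the second because
`(D/(2μ²)) e k ≤ 1/4`. Hence `e (k+1) ≤ e k / 2 ≤ μ²/(2D)`, so the neighborhood is invariant
and the squared distance halves at every step.
-/

theorem le_half_of_le_mul_add_sq {a a' b c h : ℝ} (ha : 0 ≤ a) (hch : c * h ≤ 1 / 4)
    (hba : b * a ≤ 1 / 4) (hrec : a' ≤ c * a * h + b * a ^ 2) : a' ≤ 1 / 2 * a := by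
  nlinarith [mul_le_mul_of_nonneg_left hch ha, mul_le_mul_of_nonneg_left hba ha]

theorem le_and_le_half_of_le_mul_add_sq {e h : ℕ → ℝ} {b c R : ℝ} (he : ∀ k, 0 ≤ e k)
    (hrec : ∀ k, e (k + 1) ≤ c * e k * h k + b * e k ^ 2) (hch : ∀ k, c * h k ≤ 1 / 4)
    (hb : 0 ≤ b) (hbR : b * R ≤ 1 / 4) (h0 : e 0 ≤ R) :
    (∀ k, e k ≤ R) ∧ ∀ k, e (k + 1) ≤ 1 / 2 * e k := by
  have step : ∀ k, e k ≤ R → e (k + 1) ≤ 1 / 2 * e k := fun k hk ↦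
    le_half_of_le_mul_add_sq (he k) (hch k) ((mul_le_mul_of_nonneg_left hk hb).trans hbR)
      (hrec k)
  have bound : ∀ k, e k ≤ R := by
    intro k
    induction k with
    | zero => exact h0
    | succ k ih => linarith [step k ih, he k]
  exact ⟨bound, fun k ↦ step k (bound k)⟩

theorem local_linear_rate_general {E : Type*} [NormedAddCommGroup E]
    (x : ℕ → E) (xstar : E) (H : ℕ → ℝ) (μ C D : ℝ)
    (hμ : 0 < μ) (hC : 0 < C) (hD : 0 < D)
    (hrec : ∀ k, ‖x (k+1) - xstar‖^2 ≤
      C/μ^2 * ‖x k - xstar‖^2 * H k + D/(2*μ^2) * ‖x k - xstar‖^4)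
    (h0 : ‖x 0 - xstar‖^2 ≤ μ^2/(2*D))
    (hHk : ∀ k, H k ≤ μ^2/(4*C)) :
    (∀ k, ‖x k - xstar‖^2 ≤ μ^2/(2*D)) ∧
    (∀ k, ‖x (k+1) - xstar‖^2 ≤ 1/2 * ‖x k - xstar‖^2) ∧
    (∀ k, ‖x k - xstar‖^2 ≤ (1/2)^k * ‖x 0 - xstar‖^2) := by
  have hCH : ∀ k, C / μ ^ 2 * H k ≤ 1 / 4 := fun k ↦ calc
    C / μ ^ 2 * H k ≤ C / μ ^ 2 * (μ ^ 2 / (4 * C)) := by gcongr; exact hHk k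
    _ = 1 / 4 := by field_simp
  have hDR : D / (2 * μ ^ 2) * (μ ^ 2 / (2 * D)) = 1 / 4 := by field_simp; ring
  obtain ⟨hbound, hhalf⟩ := le_and_le_half_of_le_mul_add_sq
    (e := fun k ↦ ‖x k - xstar‖ ^ 2) (fun k ↦ by positivity)
    (fun k ↦ (hrec k).trans_eq (by ring)) hCH (by positivity) hDR.le h0
  exact ⟨hbound, hhalf, fun k ↦
    le_geom (u := fun k ↦ ‖x k - xstar‖ ^ 2) (c := 1 / 2) (by norm_num) k fun j _ ↦ hhalf j⟩

/-- Under the recursion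
`‖x^{k+1}−x*‖² ≤ (C/μ²)‖x^k−x*‖²·H^k + (D/(2μ²))‖x^k−x*‖⁴`,
with `‖x^0−x*‖² ≤ μ²/(2D)` and `H^k ≤ μ²/(4C)` for all `k`, the iterates stay in the
neighborhood, halve the squared distance each step, and converge linearly. -/
theorem local_linear_rate {E : Type*} [NormedAddCommGroup E]
    (x : ℕ → E) (xstar : E) (H : ℕ → ℝ) (μ C D : ℝ)
    (hμ : 0 < μ) (hC : 0 < C) (hD : 0 < D) (hH : ∀ k, 0 ≤ H k)
    (hrec : ∀ k, ‖x (k+1) - xstar‖^2 ≤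
      C/μ^2 * ‖x k - xstar‖^2 * H k + D/(2*μ^2) * ‖x k - xstar‖^4)
    (h0 : ‖x 0 - xstar‖^2 ≤ μ^2/(2*D))
    (hHk : ∀ k, H k ≤ μ^2/(4*C)) :
    (∀ k, ‖x k - xstar‖^2 ≤ μ^2/(2*D)) ∧
    (∀ k, ‖x (k+1) - xstar‖^2 ≤ 1/2 * ‖x k - xstar‖^2) ∧
    (∀ k, ‖x k - xstar‖^2 ≤ (1/2)^k * ‖x 0 - xstar‖^2) :=
  local_linear_rate_general x xstar H μ C D hμ hC hD hrec h0 hHk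
end

section
/- In the CBAG induction step with deterministic contractive compressor C of parameter α: if ‖H − ∇²fᵢ(x*)‖_F ≤ μ/(2√C₀) and ‖x' − x*‖ ≤ (1−√(1−α))μ/(4√C₀ L_F), then ‖H + C(∇²fᵢ(x') − H) − ∇²fᵢ(x*)‖_F ≤ √(1−α)‖H − ∇²fᵢ(x*)‖_F + 2L_F‖x' − x*‖ ≤ μ/(2√C₀). -/
open Finset

/-!
With `M = ∇²fᵢ(x') − H`, the new error is `(C(M) − M) + (∇²fᵢ(x') − ∇²fᵢ(x*))`. The compressor
bounds the first part by `√(1−α)‖M‖ ≤ √(1−α)(‖H − ∇²fᵢ(x*)‖ + L_F‖x' − x*‖)` and the Lipschitz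
Hessian bounds the second by `L_F‖x' − x*‖`. The step condition on `x'` makes the drift
`2L_F‖x' − x*‖` at most the share `(1 − √(1−α))` of the radius `μ/(2√C₀)`, so the radius is kept.
-/

theorem norm_add_compress_sub_le {V : Type*} [NormedAddCommGroup V] {C : V → V} {s : ℝ}
    (hC : ∀ M, ‖C M - M‖ ≤ s * ‖M‖) (hs0 : 0 ≤ s) (hs1 : s ≤ 1) (H G G' : V) :
    ‖H + C (G' - H) - G‖ ≤ s * ‖H - G‖ + 2 * ‖G' - G‖ := by
  have hdrift : ‖G' - H‖ ≤ ‖H - G‖ + ‖G' - G‖ := by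
    simpa [norm_sub_rev H G, add_comm] using norm_sub_le_norm_sub_add_norm_sub G' G H
  calc ‖H + C (G' - H) - G‖ = ‖(C (G' - H) - (G' - H)) + (G' - G)‖ := by congr 1; abel
    _ ≤ s * ‖G' - H‖ + ‖G' - G‖ := (norm_add_le _ _).trans (by gcongr; exact hC _)
    _ ≤ s * (‖H - G‖ + ‖G' - G‖) + ‖G' - G‖ := by gcongr
    _ ≤ s * ‖H - G‖ + 2 * ‖G' - G‖ := by nlinarith [norm_nonneg (G' - G)]

theorem mul_add_two_mul_le_of_le {s a r L t : ℝ} (hs : 0 ≤ s) (hL : 0 < L) (ha : a ≤ r)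
    (ht : t ≤ (1 - s) * r / (2 * L)) : s * a + 2 * L * t ≤ r := by
  have : 2 * L * t ≤ (1 - s) * r := by
    rw [le_div_iff₀ (by positivity)] at ht
    linarith
  nlinarith

section Frobenius

attribute [local instance] Matrix.frobeniusNormedAddCommGroup

theorem sqrt_frobSq_eq_norm {d : ℕ} (X : Matrix (Fin d) (Fin d) ℝ) :
    Real.sqrt (frobSq X) = ‖X‖ := by
  rw [Matrix.frobenius_norm_def, Real.sqrt_eq_rpow, frobSq]
  simp [Real.norm_eq_abs, sq_abs]

theorem cbag_induction_step_general {d : ℕ} {E : Type*} [NormedAddCommGroup E]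
    (α μ C₀ LF : ℝ) (hα0 : 0 < α) (hLF : 0 < LF)
    (C : Matrix (Fin d) (Fin d) ℝ → Matrix (Fin d) (Fin d) ℝ)
    (hC : ∀ M, Real.sqrt (frobSq (C M - M)) ≤
      Real.sqrt (1 - α) * Real.sqrt (frobSq M))
    (Hess : E → Matrix (Fin d) (Fin d) ℝ)
    (hLip : ∀ a b, Real.sqrt (frobSq (Hess a - Hess b)) ≤ LF * ‖a - b‖)
    (H : Matrix (Fin d) (Fin d) ℝ) (x' xstar : E)
    (hH : Real.sqrt (frobSq (H - Hess xstar)) ≤ μ/(2*Real.sqrt C₀))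
    (hx : ‖x' - xstar‖ ≤ (1 - Real.sqrt (1 - α)) * μ / (4 * Real.sqrt C₀ * LF)) :
    Real.sqrt (frobSq (H + C (Hess x' - H) - Hess xstar)) ≤
        Real.sqrt (1 - α) * Real.sqrt (frobSq (H - Hess xstar))
          + 2*LF*‖x' - xstar‖ ∧
      Real.sqrt (1 - α) * Real.sqrt (frobSq (H - Hess xstar))
          + 2*LF*‖x' - xstar‖ ≤ μ/(2*Real.sqrt C₀) := by
  simp only [sqrt_frobSq_eq_norm] at hC hLip hH ⊢
  have hs0 : 0 ≤ Real.sqrt (1 - α) := Real.sqrt_nonneg _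
  have hs1 : Real.sqrt (1 - α) ≤ 1 := Real.sqrt_le_one.mpr (by linarith)
  refine ⟨?_, mul_add_two_mul_le_of_le hs0 hLF hH (hx.trans_eq (by ring))⟩
  calc ‖H + C (Hess x' - H) - Hess xstar‖
      ≤ Real.sqrt (1 - α) * ‖H - Hess xstar‖ + 2 * ‖Hess x' - Hess xstar‖ :=
        norm_add_compress_sub_le hC hs0 hs1 _ _ _
    _ ≤ Real.sqrt (1 - α) * ‖H - Hess xstar‖ + 2 * LF * ‖x' - xstar‖ := by
        linarith [hLip x' xstar]

/-- CBAG induction step with a deterministic contractive compressor `C` of parameter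
`α`: if `‖H − ∇²fᵢ(x*)‖_F ≤ μ/(2√C₀)` and
`‖x' − x*‖ ≤ (1−√(1−α))μ/(4√C₀ L_F)`, then
`‖H + C(∇²fᵢ(x') − H) − ∇²fᵢ(x*)‖_F ≤ √(1−α)‖H − ∇²fᵢ(x*)‖_F + 2L_F‖x' − x*‖
 ≤ μ/(2√C₀)`. -/
theorem cbag_induction_step {d : ℕ} {E : Type*} [NormedAddCommGroup E]
    [NormedSpace ℝ E]
    (α μ C₀ LF : ℝ) (hα0 : 0 < α) (hα1 : α ≤ 1) (hμ : 0 < μ)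
    (hC₀ : 0 < C₀) (hLF : 0 < LF)
    (C : Matrix (Fin d) (Fin d) ℝ → Matrix (Fin d) (Fin d) ℝ)
    (hC : ∀ M, Real.sqrt (frobSq (C M - M)) ≤
      Real.sqrt (1 - α) * Real.sqrt (frobSq M))
    (Hess : E → Matrix (Fin d) (Fin d) ℝ)
    (hLip : ∀ a b, Real.sqrt (frobSq (Hess a - Hess b)) ≤ LF * ‖a - b‖)
    (H : Matrix (Fin d) (Fin d) ℝ) (x' xstar : E)
    (hH : Real.sqrt (frobSq (H - Hess xstar)) ≤ μ/(2*Real.sqrt C₀))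
    (hx : ‖x' - xstar‖ ≤ (1 - Real.sqrt (1 - α)) * μ / (4 * Real.sqrt C₀ * LF)) :
    Real.sqrt (frobSq (H + C (Hess x' - H) - Hess xstar)) ≤
        Real.sqrt (1 - α) * Real.sqrt (frobSq (H - Hess xstar))
          + 2*LF*‖x' - xstar‖ ∧
      Real.sqrt (1 - α) * Real.sqrt (frobSq (H - Hess xstar))
          + 2*LF*‖x' - xstar‖ ≤ μ/(2*Real.sqrt C₀) :=
  cbag_induction_step_general α μ C₀ LF hα0 hLF C hC Hess hLip H x' xstar hH hx

end Frobenius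
end
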